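/- Let h₀ ∈ (0,1). With V₀, D₀, p₀, ρ₀, T₀ as in the context, the pushforward measure Measure.map T₀ ρ₀ admits no continuous Lebesgue density: there is no continuous function f : ℝ → ℝ such that Measure.map T₀ ρ₀ equals the Lebesgue measure with density x ↦ ENNReal.ofReal (f x). (The density has jump discontinuities at x = 1 and x = -1, of ratio (1-h₀)⁻¹.) -/

import Mathlib

open MeasureTheory

/-- The initial potential: `V₀ x = x²/2` for `|x| < 1` and `|x| - 1/2` otherwise. -/
noncomputable def V₀ (x : ℝ) : ℝ := if |x| < 1 then x ^ 2 / 2 else |x| - 1 / 2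

/-- The normalization constant `D₀ = ∫_{-1}^{1} exp(-x²/2) dx + 2 exp(-1/2)`. -/
noncomputable def D₀ : ℝ := (∫ x in (-1 : ℝ)..1, Real.exp (-x ^ 2 / 2)) + 2 * Real.exp (-1 / 2)

/-- The initial density `p₀ = D₀⁻¹ exp(-V₀)`. -/
noncomputable def p₀ (x : ℝ) : ENNReal := ENNReal.ofReal (D₀⁻¹ * Real.exp (-V₀ x))

/-- The initial measure `ρ₀ = p₀ · Lebesgue`. -/
noncomputable def ρ₀ : Measure ℝ := volume.withDensity p₀

/-- The one-step forward-Euler pushforward map for the Wasserstein gradient flow of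
`ρ ↦ KL(ρ | standard Gaussian)` started at `ρ₀`, with step size `h₀`. -/
noncomputable def T₀ (h₀ : ℝ) (x : ℝ) : ℝ :=
  if |x| < 1 then x else if 1 ≤ x then (1 - h₀) * x + h₀ else (1 - h₀) * x - h₀

/-!
On `(-1, 1)` the map `T₀` is the identity and on `(1, ∞)` it is the affine contraction
`x ↦ (1 - h₀) x + h₀`, so by the change of variables formula `(T₀)_♯ ρ₀` has density
`D₀⁻¹ exp (-x²/2)` on `(-1, 1)` and `(1 - h₀)⁻¹ p₀ (T₀⁻¹ y)` on `(1, ∞)`. A continuous density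
agrees with these continuous functions on the two open intervals, hence also at their common
endpoint `1`, where they take the values `D₀⁻¹ e^{-1/2}` and `(1 - h₀)⁻¹ D₀⁻¹ e^{-1/2}`.
-/

open Set
open scoped ENNReal

theorem eqOn_closure_of_withDensity_restrict_eq {X : Type*} [TopologicalSpace X]
    [MeasurableSpace X] [OpensMeasurableSpace X] {μ : Measure X} [μ.IsOpenPosMeasure]
    [SigmaFinite μ] {f g : X → ℝ≥0∞} (hf : Continuous f) (hg : Continuous g) {U : Set X}
    (hU : IsOpen U) (h : (μ.withDensity f).restrict U = (μ.withDensity g).restrict U) :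
    EqOn f g (closure U) := by
  rw [restrict_withDensity hU.measurableSet, restrict_withDensity hU.measurableSet,
    withDensity_eq_iff_of_sigmaFinite hf.measurable.aemeasurable hg.measurable.aemeasurable] at h
  exact (Measure.eqOn_open_of_ae_eq h hU hf.continuousOn hg.continuousOn).closure hf hg

theorem restrict_map_withDensity_eq {T T' : ℝ → ℝ} {p q : ℝ → ℝ≥0∞} {s U : Set ℝ}
    (hT : Measurable T) (hU : MeasurableSet U) (hTU : T ⁻¹' U = s) (hUT : U ⊆ T '' s)
    (hT' : ∀ x ∈ s, HasDerivWithinAt T (T' x) s x) (hinj : InjOn T s)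
    (hpq : ∀ x ∈ s, p x = ENNReal.ofReal |T' x| * q (T x)) :
    ((volume.withDensity p).map T).restrict U = (volume.withDensity q).restrict U := by
  have hs : MeasurableSet s := hTU ▸ hT hU
  have himage : T '' s = U := (hTU ▸ image_preimage_subset T U).antisymm hUT
  ext t ht
  have hts : MeasurableSet (T ⁻¹' t ∩ s) := (hT ht).inter hs
  rw [Measure.restrict_apply ht, Measure.restrict_apply ht, Measure.map_apply hT (ht.inter hU),
    withDensity_apply _ (ht.inter hU), withDensity_apply _ (hT (ht.inter hU)), preimage_inter,
    hTU, ← himage, ← image_preimage_inter, lintegral_image_eq_lintegral_abs_deriv_mul hts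
      (fun x hx => (hT' x hx.2).mono inter_subset_right) (hinj.mono inter_subset_right)]
  exact setLIntegral_congr_fun hts fun x hx => hpq x hx.2

theorem measurable_T₀ (h₀ : ℝ) : Measurable (T₀ h₀) :=
  Measurable.ite (measurableSet_lt measurable_id.abs measurable_const) measurable_id <|
    Measurable.ite (measurableSet_le measurable_const measurable_id) (by fun_prop) (by fun_prop)

theorem strictMono_T₀ {h₀ : ℝ} (hh1 : h₀ < 1) : StrictMono (T₀ h₀) := by
  intro x y hxy
  simp only [T₀, abs_lt]
  split_ifs <;> (try simp only [not_and_or, not_lt, not_le] at *) <;> (try casesm* _ ∨ _) <;>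
    nlinarith

theorem T₀_of_abs_lt {h₀ x : ℝ} (hx : |x| < 1) : T₀ h₀ x = x := if_pos hx

theorem T₀_of_one_le {h₀ x : ℝ} (hx : 1 ≤ x) : T₀ h₀ x = (1 - h₀) * x + h₀ := by
  rw [T₀, if_neg (not_lt.2 (hx.trans (le_abs_self x))), if_pos hx]

theorem T₀_neg_one (h₀ : ℝ) : T₀ h₀ (-1) = -1 := by norm_num [T₀]

theorem preimage_T₀_Ioo {h₀ : ℝ} (hh1 : h₀ < 1) : T₀ h₀ ⁻¹' Ioo (-1) 1 = Ioo (-1) 1 := by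
  simpa [T₀_neg_one, T₀_of_one_le] using
    (OrderEmbedding.ofStrictMono _ (strictMono_T₀ hh1)).preimage_Ioo (-1) 1

theorem preimage_T₀_Ioi {h₀ : ℝ} (hh1 : h₀ < 1) : T₀ h₀ ⁻¹' Ioi 1 = Ioi 1 := by
  simpa [T₀_of_one_le] using
    (OrderEmbedding.ofStrictMono _ (strictMono_T₀ hh1)).preimage_Ioi 1

theorem D₀_pos : 0 < D₀ :=
  add_pos_of_nonneg_of_pos
    (intervalIntegral.integral_nonneg (by norm_num) fun x _ => (Real.exp_pos _).le)
    (by positivity)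

noncomputable def innerDensity (x : ℝ) : ℝ := D₀⁻¹ * Real.exp (-(x ^ 2 / 2))

/-- `(1 - h₀)⁻¹ p₀ (T₀⁻¹ y)` for `y > 1`, extended by the same formula to all of `ℝ`. -/
noncomputable def outerDensity (h₀ y : ℝ) : ℝ :=
  (1 - h₀)⁻¹ * (D₀⁻¹ * Real.exp (-((y - h₀) / (1 - h₀) - 1 / 2)))

theorem continuous_innerDensity : Continuous innerDensity := by
  unfold innerDensity; fun_prop

theorem continuous_outerDensity (h₀ : ℝ) : Continuous (outerDensity h₀) := by
  unfold outerDensity; fun_prop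

theorem outerDensity_one {h₀ : ℝ} (hh1 : h₀ < 1) :
    outerDensity h₀ 1 = (1 - h₀)⁻¹ * innerDensity 1 := by
  rw [outerDensity, innerDensity, div_self (sub_pos.2 hh1).ne']
  norm_num

theorem restrict_map_ρ₀_Ioo {h₀ : ℝ} (hh1 : h₀ < 1) :
    (ρ₀.map (T₀ h₀)).restrict (Ioo (-1) 1)
      = (volume.withDensity fun x => ENNReal.ofReal (innerDensity x)).restrict (Ioo (-1) 1) := by
  have hid : EqOn (T₀ h₀) id (Ioo (-1) 1) := fun x hx => T₀_of_abs_lt (abs_lt.2 hx)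
  refine restrict_map_withDensity_eq (measurable_T₀ h₀) measurableSet_Ioo (preimage_T₀_Ioo hh1)
    (fun y hy => ⟨y, hy, hid hy⟩) (fun x hx => (hasDerivWithinAt_id x _).congr hid (hid hx))
    (injOn_id _ |>.congr hid.symm) fun x hx => ?_
  rw [hid hx, abs_one, ENNReal.ofReal_one, one_mul, p₀, V₀, if_pos (abs_lt.2 hx), innerDensity]
  rfl

theorem restrict_map_ρ₀_Ioi {h₀ : ℝ} (hh1 : h₀ < 1) :
    (ρ₀.map (T₀ h₀)).restrict (Ioi 1)
      = (volume.withDensity fun x => ENNReal.ofReal (outerDensity h₀ x)).restrict (Ioi 1) := by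
  have hpos : 0 < 1 - h₀ := sub_pos.2 hh1
  have haff : EqOn (T₀ h₀) (fun x => (1 - h₀) * x + h₀) (Ioi 1) :=
    fun x hx => T₀_of_one_le hx.le
  have hsurj : Ioi 1 ⊆ T₀ h₀ '' Ioi 1 := fun y hy => by
    have hmem : (y - h₀) / (1 - h₀) ∈ Ioi 1 := (lt_div_iff₀ hpos).2 (by linarith [mem_Ioi.1 hy])
    refine ⟨_, hmem, ?_⟩
    rw [haff hmem]
    field_simp
    ring
  refine restrict_map_withDensity_eq (T' := fun _ => 1 - h₀) (measurable_T₀ h₀)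
    measurableSet_Ioi (preimage_T₀_Ioi hh1) hsurj (fun x hx => ?_)
    (((add_left_injective h₀).comp (mul_right_injective₀ hpos.ne')).injOn.congr haff.symm)
    fun x hx => ?_
  · simpa using (((hasDerivAt_id x).const_mul (1 - h₀)).add_const h₀).hasDerivWithinAt.congr
      haff (haff hx)
  · have hinv : ((1 - h₀) * x + h₀ - h₀) / (1 - h₀) = x := by
      field_simp
      ring
    rw [haff hx, abs_of_pos hpos, ← ENNReal.ofReal_mul hpos.le, outerDensity,
      mul_inv_cancel_left₀ hpos.ne', hinv, p₀, V₀, if_neg (not_lt.2 (hx.le.trans (le_abs_self x))),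
      abs_of_pos (zero_lt_one.trans hx)]

/-- For `h₀ ∈ (0,1)`, the pushforward `(T₀)_♯ ρ₀` admits no continuous
Lebesgue density (its density has jump discontinuities at `x = ±1`). -/
theorem forwardEuler_step_no_continuous_density
    (h₀ : ℝ) (hh0 : 0 < h₀) (hh1 : h₀ < 1) :
    ¬ ∃ f : ℝ → ℝ, Continuous f ∧
      Measure.map (T₀ h₀) ρ₀ = volume.withDensity (fun x => ENNReal.ofReal (f x)) := by
  rintro ⟨f, hf, hmap⟩
  have hf' : Continuous fun x => ENNReal.ofReal (f x) := ENNReal.continuous_ofReal.comp hf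
  have hinner : ENNReal.ofReal (f 1) = ENNReal.ofReal (innerDensity 1) :=
    eqOn_closure_of_withDensity_restrict_eq hf'
      (ENNReal.continuous_ofReal.comp continuous_innerDensity) isOpen_Ioo
      (hmap ▸ restrict_map_ρ₀_Ioo hh1) (by simp [closure_Ioo (by norm_num : (-1 : ℝ) ≠ 1)])
  have houter : ENNReal.ofReal (f 1) = ENNReal.ofReal (outerDensity h₀ 1) :=
    eqOn_closure_of_withDensity_restrict_eq hf'
      (ENNReal.continuous_ofReal.comp (continuous_outerDensity h₀)) isOpen_Ioi
      (hmap ▸ restrict_map_ρ₀_Ioi hh1) (by simp)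
  have hpos : 0 < innerDensity 1 := mul_pos (inv_pos.2 D₀_pos) (Real.exp_pos _)
  have hjump : innerDensity 1 = (1 - h₀)⁻¹ * innerDensity 1 := by
    rw [outerDensity_one hh1] at houter
    exact (ENNReal.ofReal_eq_ofReal_iff hpos.le (by positivity)).1 (hinner.symm.trans houter)
  have : 1 < (1 - h₀)⁻¹ := (one_lt_inv₀ (sub_pos.2 hh1)).2 (by linarith)
  nlinarith
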